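/- Let U ⊆ ℝ³ be open, let Φ : U → ℝ³ be a C¹ diffeomorphism onto its image with det DΦ(x̂) > 0 for all x̂ ∈ U, let B̂ : U → ℝ³ be continuous with DΦ(x̂) B̂(x̂) ≠ 0 for all x̂ ∈ U, and define the 2-form push-forward B(Φ(x̂)) := DΦ(x̂) B̂(x̂) / det DΦ(x̂). Let x̂ : I → U be a differentiable curve such that the physical curve x_t := Φ(x̂_t) is an arc-length-parametrized integral curve of B, i.e. d x_t/dt = B(x_t)/|B(x_t)| for all t ∈ I. Then the logical curve satisfies d x̂_t/dt = B̂(x̂_t) / |DΦ(x̂_t) B̂(x̂_t)| for all t ∈ I. -/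

import Mathlib

open MeasureTheory Matrix RealInnerProductSpace

noncomputable section

/-- Points/vectors in ℝ³. -/
abbrev V3 : Type := Fin 3 → ℝ

/-- Partial derivative ∂ᵢ of a scalar function on ℝ³. -/
def pder (i : Fin 3) (f : V3 → ℝ) (x : V3) : ℝ :=
  fderiv ℝ f x (Pi.single i 1)

/-- Gradient of a scalar function on ℝ³. -/
def grad (f : V3 → ℝ) (x : V3) : V3 :=
  fun i => pder i f x

/-- Curl of a vector field on ℝ³. -/
def curl (F : V3 → V3) (x : V3) : V3 :=
  ![pder 1 (fun y => F y 2) x - pder 2 (fun y => F y 1) x,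
    pder 2 (fun y => F y 0) x - pder 0 (fun y => F y 2) x,
    pder 0 (fun y => F y 1) x - pder 1 (fun y => F y 0) x]

/-- Divergence of a vector field on ℝ³. -/
def dvg (F : V3 → V3) (x : V3) : ℝ :=
  pder 0 (fun y => F y 0) x + pder 1 (fun y => F y 1) x + pder 2 (fun y => F y 2) x

/-- Cross product on ℝ³. -/
def cross (a b : V3) : V3 :=
  ![a 1 * b 2 - a 2 * b 1, a 2 * b 0 - a 0 * b 2, a 0 * b 1 - a 1 * b 0]

/-- Euclidean dot product on ℝ³. -/
def dot (a b : V3) : ℝ := ∑ i, a i * b i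

/-- Jacobian matrix (DΦ(x))ᵢⱼ = ∂Φᵢ/∂xⱼ. -/
def jac (Φ : V3 → V3) (x : V3) : Matrix (Fin 3) (Fin 3) ℝ :=
  Matrix.of fun i j => pder j (fun y => Φ y i) x

/-- Euclidean norm on ℝ³. -/
def eucNorm (a : V3) : ℝ := Real.sqrt (dot a a)

/-!
By the chain rule, d/dt Φ(x̂_t) = DΦ(x̂_t) (dx̂_t/dt), and DΦ(x̂_t) is injective because its
determinant is positive, so dx̂_t/dt is determined by the field-line equation. Normalising
B(Φ(x̂)) = (det DΦ)⁻¹ DΦ B̂ discards the positive factor (det DΦ)⁻¹, leaving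
DΦ B̂ / |DΦ B̂| = DΦ (B̂ / |DΦ B̂|).
-/

theorem HasDerivAt.of_hasFDerivAt_comp {𝕜 E F : Type*} [NontriviallyNormedField 𝕜]
    [NormedAddCommGroup E] [NormedSpace 𝕜 E] [NormedAddCommGroup F] [NormedSpace 𝕜 F]
    {f : 𝕜 → E} {g : E → F} {L : E →L[𝕜] F} {t : 𝕜} {v : E}
    (hg : HasFDerivAt g L (f t)) (hf : DifferentiableAt 𝕜 f t) (hL : Function.Injective L)
    (hgf : HasDerivAt (fun s => g (f s)) (L v) t) : HasDerivAt f v t := by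
  have hv : L (_root_.deriv f t) = L v := (hg.comp_hasDerivAt t hf.hasDerivAt).unique hgf
  exact hL hv ▸ hf.hasDerivAt

theorem jac_eq_toMatrix' {Φ : V3 → V3} {x : V3} (h : DifferentiableAt ℝ Φ x) :
    jac Φ x = LinearMap.toMatrix' (fderiv ℝ Φ x : V3 →ₗ[ℝ] V3) := by
  ext i j
  simp [jac, pder, fderiv_apply h, LinearMap.toMatrix'_apply]

theorem jac_mulVec {Φ : V3 → V3} {x : V3} (h : DifferentiableAt ℝ Φ x) (v : V3) :
    (jac Φ x).mulVec v = fderiv ℝ Φ x v := by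
  rw [jac_eq_toMatrix' h, LinearMap.toMatrix'_mulVec]
  rfl

theorem injective_fderiv_of_det_jac_ne_zero {Φ : V3 → V3} {x : V3} (h : DifferentiableAt ℝ Φ x)
    (hdet : (jac Φ x).det ≠ 0) : Function.Injective (fderiv ℝ Φ x) := by
  have := Matrix.mulVec_injective_of_det_ne_zero hdet
  rwa [funext (jac_mulVec h)] at this

theorem eucNorm_eq_norm (v : V3) : eucNorm v = ‖WithLp.toLp 2 v‖ := by
  simp [eucNorm, dot, EuclideanSpace.norm_eq, Real.norm_eq_abs, sq]

theorem eucNorm_smul (c : ℝ) (v : V3) : eucNorm (c • v) = |c| * eucNorm v := by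
  simp only [eucNorm_eq_norm, WithLp.toLp_smul, norm_smul, Real.norm_eq_abs]

theorem inv_eucNorm_smul_pos_smul {c : ℝ} (hc : 0 < c) (v : V3) :
    (eucNorm (c • v))⁻¹ • c • v = (eucNorm v)⁻¹ • v := by
  rw [eucNorm_smul, abs_of_pos hc, smul_smul, _root_.mul_inv_rev, mul_assoc,
    inv_mul_cancel₀ hc.ne', mul_one]

theorem field_line_logical_coordinates_arclength_general
    (U : Set V3) (hU : IsOpen U) (Φ : V3 → V3)
    (hΦ : ContDiffOn ℝ 1 Φ U)
    (hdet : ∀ x ∈ U, 0 < (jac Φ x).det)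
    (Bhat : V3 → V3)
    (B : V3 → V3)
    (hpush : ∀ x ∈ U, B (Φ x) = ((jac Φ x).det)⁻¹ • (jac Φ x).mulVec (Bhat x))
    (I : Set ℝ) (xc : ℝ → V3)
    (hmem : ∀ t ∈ I, xc t ∈ U)
    (hdiff : ∀ t ∈ I, DifferentiableAt ℝ xc t)
    (hflow : ∀ t ∈ I, HasDerivAt (fun s => Φ (xc s))
      ((eucNorm (B (Φ (xc t))))⁻¹ • B (Φ (xc t))) t) :
    ∀ t ∈ I, HasDerivAt xc
      ((eucNorm ((jac Φ (xc t)).mulVec (Bhat (xc t))))⁻¹ • Bhat (xc t)) t := by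
  intro t ht
  have hx := hmem t ht
  have hΦx : DifferentiableAt ℝ Φ (xc t) :=
    (hΦ.contDiffAt (hU.mem_nhds hx)).differentiableAt one_ne_zero
  refine HasDerivAt.of_hasFDerivAt_comp hΦx.hasFDerivAt (hdiff t ht)
    (injective_fderiv_of_det_jac_ne_zero hΦx (hdet _ hx).ne') ?_
  rw [map_smul, ← jac_mulVec hΦx, ← inv_eucNorm_smul_pos_smul (inv_pos.2 (hdet _ hx)),
    ← hpush _ hx]
  exact hflow t ht

/-- arc-length field-line integration in logical coordinates:
if x_t = Φ(x̂_t) is an arc-length integral curve of the 2-form push-forward B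
of B̂, then the logical curve satisfies dx̂/dt = B̂(x̂)/|DΦ(x̂) B̂(x̂)|. -/
theorem field_line_logical_coordinates_arclength
    (U : Set V3) (hU : IsOpen U) (Φ : V3 → V3)
    (hΦ : ContDiffOn ℝ 1 Φ U) (hinj : Set.InjOn Φ U)
    (hdet : ∀ x ∈ U, 0 < (jac Φ x).det)
    (Bhat : V3 → V3) (hBhat : ContinuousOn Bhat U)
    (hnz : ∀ x ∈ U, (jac Φ x).mulVec (Bhat x) ≠ 0)
    (B : V3 → V3)
    (hpush : ∀ x ∈ U, B (Φ x) = ((jac Φ x).det)⁻¹ • (jac Φ x).mulVec (Bhat x))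
    (I : Set ℝ) (xc : ℝ → V3)
    (hmem : ∀ t ∈ I, xc t ∈ U)
    (hdiff : ∀ t ∈ I, DifferentiableAt ℝ xc t)
    (hflow : ∀ t ∈ I, HasDerivAt (fun s => Φ (xc s))
      ((eucNorm (B (Φ (xc t))))⁻¹ • B (Φ (xc t))) t) :
    ∀ t ∈ I, HasDerivAt xc
      ((eucNorm ((jac Φ (xc t)).mulVec (Bhat (xc t))))⁻¹ • Bhat (xc t)) t :=
  field_line_logical_coordinates_arclength_general U hU Φ hΦ hdet Bhat B hpush I xc hmem hdiff hflow

end
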